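/- arXiv:2111.13391 — 2 statements merged into one kernel-verified Lean document; each statement's English description precedes it below -/
import Mathlib

section
/- Suppose y = Xβ + ε for some β ∈ ℝ^p and ε ∈ ℝ^n, let S₁ ⊆ Ŝ, assume z_jᵀ x_j ≠ 0, and define the estimator β̂_j = z_jᵀ y / (z_jᵀ x_j), the noise term W_j = z_jᵀ ε / (z_jᵀ x_j), and the bias Δ_j = β̂_j − β_j − W_j. Then Δ_j = ∑_{k∈Ŝᶜ∖{j}} (z_jᵀ x_k) β_k / (z_jᵀ x_j) and |Δ_j| ≤ ( max_{k∈Ŝᶜ∖{j}} | √n λ_j ‖ψ_k^{(j)}‖₂ / (z_jᵀ x_j) | ) · ∑_{k∈S₁ᶜ} |β_k| (with the maximum interpreted as 0 if Ŝᶜ∖{j} is empty). -/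
/-!
Statement 2 (first part of Theorem 1): decomposition of the HOT estimator error.
If `y = Xβ + ε`, `S₁ ⊆ Ŝ`, `z_jᵀ x_j ≠ 0`, `β̂_j = z_jᵀ y / (z_jᵀ x_j)`,
`W_j = z_jᵀ ε / (z_jᵀ x_j)` and `Δ_j = β̂_j − β_j − W_j`, then
`Δ_j = ∑_{k∈Ŝᶜ∖{j}} (z_jᵀ x_k) β_k / (z_jᵀ x_j)` and
`|Δ_j| ≤ (max_{k∈Ŝᶜ∖{j}} |√n λ_j ‖ψ_k^{(j)}‖₂ / (z_jᵀ x_j)|) ∑_{k∈S₁ᶜ} |β_k|`,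
with the maximum interpreted as `0` if `Ŝᶜ∖{j}` is empty (here realized as an
`⨆` over the Finset, which is `0` for the empty set).
-/

noncomputable section

open Finset Matrix

namespace HOT

variable {n p : ℕ}

/-- `k`-th column of `X`. -/
def col (X : Matrix (Fin n) (Fin p) ℝ) (k : Fin p) : Fin n → ℝ := fun i => X i k

/-- Submatrix of `X` consisting of the columns indexed by `S`. -/
def sub (X : Matrix (Fin n) (Fin p) ℝ) (S : Finset (Fin p)) : Matrix (Fin n) ↥S ℝ :=
  Matrix.of fun i k => X i (k : Fin p)

/-- Gram matrix `X_Sᵀ X_S`. -/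
def gram (X : Matrix (Fin n) (Fin p) ℝ) (S : Finset (Fin p)) : Matrix ↥S ↥S ℝ :=
  (sub X S)ᵀ * sub X S

/-- Orthogonal projection `P_S = X_S (X_Sᵀ X_S)⁻¹ X_Sᵀ` onto the column space of `X_S`. -/
def proj (X : Matrix (Fin n) (Fin p) ℝ) (S : Finset (Fin p)) : Matrix (Fin n) (Fin n) ℝ :=
  sub X S * (gram X S)⁻¹ * (sub X S)ᵀ

/-- `ψ_k^{(j)} = (I_n − P_{Ŝ∖{j}}) x_k`. -/
def psi (X : Matrix (Fin n) (Fin p) ℝ) (S : Finset (Fin p)) (j k : Fin p) : Fin n → ℝ :=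
  col X k - (proj X (S.erase j)).mulVec (col X k)

/-- `v_{jk} = ‖ψ_k^{(j)}‖₂ / √n`. -/
def v (X : Matrix (Fin n) (Fin p) ℝ) (S : Finset (Fin p)) (j k : Fin p) : ℝ :=
  Real.sqrt (∑ i, (psi X S j k i) ^ 2) / Real.sqrt n

/-- The relaxed-orthogonalization objective
`g(b) = (2n)⁻¹ ‖ψ_j^{(j)} − ∑_{k∈Ŝᶜ∖{j}} b_k ψ_k^{(j)}‖₂² + λ_j ∑_{k∈Ŝᶜ∖{j}} v_{jk} |b_k|`. -/
def gObj (X : Matrix (Fin n) (Fin p) ℝ) (S : Finset (Fin p)) (j : Fin p) (lam : ℝ)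
    (b : Fin p → ℝ) : ℝ :=
  (2 * n : ℝ)⁻¹ * ∑ i, (psi X S j j i - ∑ k ∈ Sᶜ.erase j, b k * psi X S j k i) ^ 2
    + lam * ∑ k ∈ Sᶜ.erase j, v X S j k * |b k|

/-- The hybrid orthogonalization vector `z_j = ψ_j^{(j)} − ∑_{k∈Ŝᶜ∖{j}} ω̂_k ψ_k^{(j)}`. -/
def zvec (X : Matrix (Fin n) (Fin p) ℝ) (S : Finset (Fin p)) (j : Fin p)
    (ωhat : Fin p → ℝ) : Fin n → ℝ :=
  fun i => psi X S j j i - ∑ k ∈ Sᶜ.erase j, ωhat k * psi X S j k i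

lemma dot_eq_transpose_mulVec (X : Matrix (Fin n) (Fin p) ℝ) (T : Finset (Fin p))
    {k : Fin p} (hk : k ∈ T) (u : Fin n → ℝ) :
    ∑ i, u i * X i k = ((sub X T)ᵀ *ᵥ u) ⟨k, hk⟩ := by
  simp [Matrix.mulVec, Matrix.transpose_apply, dotProduct, sub, mul_comm]

lemma proj_dot (X : Matrix (Fin n) (Fin p) ℝ) (T : Finset (Fin p))
    (hG : IsUnit (gram X T)) {k : Fin p} (hk : k ∈ T) (u : Fin n → ℝ) :
    ∑ i, (proj X T).mulVec u i * X i k = ∑ i, u i * X i k := by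
  have hG1 : gram X T * (gram X T)⁻¹ = 1 :=
    Matrix.mul_nonsing_inv _ ((Matrix.isUnit_iff_isUnit_det _).mp hG)
  have key : (sub X T)ᵀ * proj X T = (sub X T)ᵀ := by
    unfold proj
    rw [← Matrix.mul_assoc, ← Matrix.mul_assoc]
    have : (sub X T)ᵀ * sub X T = gram X T := rfl
    rw [this, hG1, Matrix.one_mul]
  rw [dot_eq_transpose_mulVec X T hk, dot_eq_transpose_mulVec X T hk,
    Matrix.mulVec_mulVec, key]

lemma psi_dot_zero (X : Matrix (Fin n) (Fin p) ℝ) (j : Fin p) (S : Finset (Fin p))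
    (hG : IsUnit (gram X (S.erase j))) {k : Fin p} (hk : k ∈ S.erase j) (m : Fin p) :
    ∑ i, psi X S j m i * X i k = 0 := by
  unfold psi
  simp only [Pi.sub_apply, sub_mul, Finset.sum_sub_distrib]
  rw [proj_dot X (S.erase j) hG hk]
  simp [col]

lemma z_dot_zero (X : Matrix (Fin n) (Fin p) ℝ) (j : Fin p) (S : Finset (Fin p))
    (hG : IsUnit (gram X (S.erase j))) (ωhat : Fin p → ℝ)
    {k : Fin p} (hk : k ∈ S.erase j) :
    ∑ i, zvec X S j ωhat i * X i k = 0 := by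
  unfold zvec
  simp only [sub_mul, Finset.sum_sub_distrib, Finset.sum_mul]
  rw [psi_dot_zero X j S hG hk j]
  rw [Finset.sum_comm]
  have : ∀ m ∈ Sᶜ.erase j, ∑ i, ωhat m * psi X S j m i * X i k = 0 := by
    intro m _
    have h0 := psi_dot_zero X j S hG hk m
    calc ∑ i, ωhat m * psi X S j m i * X i k
        = ωhat m * ∑ i, psi X S j m i * X i k := by
          rw [Finset.mul_sum]; exact Finset.sum_congr rfl fun i _ => by ring
      _ = 0 := by rw [h0, mul_zero]
  rw [Finset.sum_congr rfl this]
  simp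

lemma z_dot_x_eq_psi (X : Matrix (Fin n) (Fin p) ℝ) (j : Fin p) (S : Finset (Fin p))
    (hG : IsUnit (gram X (S.erase j))) (ωhat : Fin p → ℝ) (k : Fin p) :
    ∑ i, zvec X S j ωhat i * X i k = ∑ i, zvec X S j ωhat i * psi X S j k i := by
  unfold psi
  simp only [Pi.sub_apply, mul_sub, Finset.sum_sub_distrib]
  have hPz : ∑ i, zvec X S j ωhat i * (proj X (S.erase j)).mulVec (col X k) i = 0 := by
    have hrw : (proj X (S.erase j)).mulVec (col X k)
        = sub X (S.erase j) *ᵥ (((gram X (S.erase j))⁻¹ * (sub X (S.erase j))ᵀ) *ᵥ col X k) := by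
      unfold proj
      rw [Matrix.mulVec_mulVec, Matrix.mul_assoc]
    rw [hrw]
    set c := ((gram X (S.erase j))⁻¹ * (sub X (S.erase j))ᵀ) *ᵥ col X k with hc
    have : ∀ i, zvec X S j ωhat i * (sub X (S.erase j) *ᵥ c) i
        = ∑ m : ↥(S.erase j), c m * (zvec X S j ωhat i * X i (m : Fin p)) := by
      intro i
      simp only [Matrix.mulVec, dotProduct, Finset.mul_sum, sub]
      exact Finset.sum_congr rfl fun m _ => by simp [Matrix.of_apply]; ring
    rw [Finset.sum_congr rfl fun i _ => this i, Finset.sum_comm]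
    have : ∀ m : ↥(S.erase j), (∑ i, c m * (zvec X S j ωhat i * X i (m : Fin p))) = 0 := by
      intro m
      rw [← Finset.mul_sum, z_dot_zero X j S hG ωhat m.2, mul_zero]
    simp [this]
  rw [hPz, sub_zero]
  simp [col]


lemma v_nonneg (X : Matrix (Fin n) (Fin p) ℝ) (S : Finset (Fin p)) (j k : Fin p) :
    0 ≤ v X S j k := by
  unfold v; positivity

lemma kkt (hn : 0 < n) (X : Matrix (Fin n) (Fin p) ℝ) (j : Fin p) (S : Finset (Fin p))
    (lam : ℝ) (hlam : 0 < lam) (ωhat : Fin p → ℝ)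
    (hω : ∀ b : Fin p → ℝ, gObj X S j lam ωhat ≤ gObj X S j lam b)
    {k : Fin p} (hk : k ∈ Sᶜ.erase j) :
    |∑ i, zvec X S j ωhat i * psi X S j k i|
      ≤ Real.sqrt n * lam * Real.sqrt (∑ i, (psi X S j k i) ^ 2) := by
  set q := ∑ i, zvec X S j ωhat i * psi X S j k i with hq
  set r := ∑ i, (psi X S j k i) ^ 2 with hr
  have hr0 : 0 ≤ r := Finset.sum_nonneg fun i _ => sq_nonneg _
  have h2n : (0:ℝ) < 2 * n := by positivity
  have main : ∀ t : ℝ, 2 * t * q ≤ t ^ 2 * r + 2 * n * (lam * v X S j k * |t|) := by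
    intro t
    have h := hω (fun m => ωhat m + if m = k then t else 0)
    unfold gObj at h
    have hsum : ∀ i, ∑ m ∈ Sᶜ.erase j, (ωhat m + if m = k then t else 0) * psi X S j m i
        = (∑ m ∈ Sᶜ.erase j, ωhat m * psi X S j m i) + t * psi X S j k i := by
      intro i
      rw [Finset.sum_congr rfl (fun m _ => add_mul (ωhat m) _ (psi X S j m i)),
        Finset.sum_add_distrib]
      congr 1
      simp [ite_mul, Finset.sum_ite_eq', hk]
    have hquad : ∀ i, (psi X S j j i - ∑ m ∈ Sᶜ.erase j,
          (ωhat m + if m = k then t else 0) * psi X S j m i) ^ 2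
        = (zvec X S j ωhat i) ^ 2 - 2 * t * (zvec X S j ωhat i * psi X S j k i)
          + t ^ 2 * (psi X S j k i) ^ 2 := by
      intro i
      rw [hsum i]
      unfold zvec
      ring
    rw [Finset.sum_congr rfl fun i _ => hquad i, Finset.sum_add_distrib,
      Finset.sum_sub_distrib, ← Finset.mul_sum, ← Finset.mul_sum, ← hq, ← hr] at h
    have hpen : ∑ m ∈ Sᶜ.erase j, v X S j m * |ωhat m + if m = k then t else 0|
        ≤ (∑ m ∈ Sᶜ.erase j, v X S j m * |ωhat m|) + v X S j k * |t| := by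
      have step : ∀ m ∈ Sᶜ.erase j, v X S j m * |ωhat m + if m = k then t else 0|
          ≤ v X S j m * |ωhat m| + (if m = k then v X S j k * |t| else 0) := by
        intro m _
        by_cases hmk : m = k
        · subst hmk
          simp only [eq_self_iff_true, if_true]
          nlinarith [v_nonneg X S j m, abs_add_le (ωhat m) t]
        · simp [hmk]
      calc ∑ m ∈ Sᶜ.erase j, v X S j m * |ωhat m + if m = k then t else 0|
          ≤ ∑ m ∈ Sᶜ.erase j, (v X S j m * |ωhat m| + (if m = k then v X S j k * |t| else 0)) :=
            Finset.sum_le_sum step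
        _ = (∑ m ∈ Sᶜ.erase j, v X S j m * |ωhat m|) + v X S j k * |t| := by
            rw [Finset.sum_add_distrib, Finset.sum_ite_eq' (Sᶜ.erase j) k
              fun _ => v X S j k * |t|]
            simp [hk]
      -- end
    have hzz : (∑ i, (psi X S j j i - ∑ m ∈ Sᶜ.erase j, ωhat m * psi X S j m i) ^ 2)
        = ∑ i, (zvec X S j ωhat i) ^ 2 := rfl
    rw [hzz] at h
    have h' : (2*n:ℝ)⁻¹ * (2*t*q) ≤ (2*n:ℝ)⁻¹ * (t^2*r) + lam * (v X S j k * |t|) := by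
      have hmono := mul_le_mul_of_nonneg_left hpen (le_of_lt hlam)
      nlinarith [h, hmono, inv_pos.mpr h2n]
    have hcancel : (2*n:ℝ) * (2*n:ℝ)⁻¹ = 1 := mul_inv_cancel₀ (ne_of_gt h2n)
    have h'' := mul_le_mul_of_nonneg_left h' (le_of_lt h2n)
    calc 2*t*q = 2*(n:ℝ)*((2*(n:ℝ))⁻¹*(2*t*q)) := by rw [← mul_assoc, hcancel, one_mul]
      _ ≤ 2*(n:ℝ)*((2*(n:ℝ))⁻¹*(t^2*r) + lam*(v X S j k*|t|)) := h''
      _ = t^2*r + 2*(n:ℝ)*(lam*v X S j k*|t|) := by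
          rw [mul_add, ← mul_assoc, hcancel, one_mul]; ring
  -- derive the bound
  have habs : ∀ s : ℝ, 0 < s → |q| ≤ s * r / 2 + n * (lam * v X S j k) := by
    intro s hs
    have h1 := main s
    have h2 := main (-s)
    rw [abs_of_pos hs] at h1
    rw [abs_neg, abs_of_pos hs] at h2
    have hq1 : q ≤ s * r / 2 + n * (lam * v X S j k) := by nlinarith
    have hq2 : -(s * r / 2 + n * (lam * v X S j k)) ≤ q := by nlinarith
    exact abs_le.mpr ⟨hq2, hq1⟩
  have final : |q| ≤ n * (lam * v X S j k) := by
    refine le_of_forall_pos_le_add fun ε hε => ?_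
    have hs : 0 < 2 * ε / (r + 1) := by positivity
    have hb := habs _ hs
    have hle : 2 * ε / (r + 1) * r / 2 ≤ ε := by
      have he : 2 * ε / (r + 1) * r / 2 = ε * (r / (r + 1)) := by
        field_simp
      rw [he]
      have h1 : r / (r + 1) ≤ 1 := by
        rw [div_le_one (by positivity : (0:ℝ) < r + 1)]; linarith
      nlinarith
    linarith
  have hsn : Real.sqrt n * Real.sqrt n = (n:ℝ) := Real.mul_self_sqrt (by positivity)
  have hsn0 : Real.sqrt n ≠ 0 := by
    have : (0:ℝ) < Real.sqrt n := Real.sqrt_pos.mpr (by exact_mod_cast hn)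
    exact ne_of_gt this
  calc |q| ≤ n * (lam * v X S j k) := final
    _ = Real.sqrt n * lam * Real.sqrt r := by
        unfold v
        rw [← hr]
        have hdiv : (n:ℝ) / Real.sqrt n = Real.sqrt n := Real.div_sqrt
        calc (n:ℝ) * (lam * (Real.sqrt r / Real.sqrt n))
            = lam * Real.sqrt r * ((n:ℝ) / Real.sqrt n) := by ring
          _ = lam * Real.sqrt r * Real.sqrt n := by rw [hdiv]
          _ = Real.sqrt n * lam * Real.sqrt r := by ring

theorem hot_error_decomposition (hn : 0 < n)
    (X : Matrix (Fin n) (Fin p) ℝ) (j : Fin p) (S : Finset (Fin p))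
    (hG : IsUnit (gram X (S.erase j)))
    (lam : ℝ) (hlam : 0 < lam)
    (ωhat : Fin p → ℝ) (hω : ∀ b : Fin p → ℝ, gObj X S j lam ωhat ≤ gObj X S j lam b)
    (S₁ : Finset (Fin p)) (hS₁ : S₁ ⊆ S)
    (β : Fin p → ℝ) (ε : Fin n → ℝ) (y : Fin n → ℝ) (hy : y = X.mulVec β + ε)
    (hzx : (∑ i, zvec X S j ωhat i * X i j) ≠ 0) :
    ((∑ i, zvec X S j ωhat i * y i) / (∑ i, zvec X S j ωhat i * X i j) - β j
        - (∑ i, zvec X S j ωhat i * ε i) / (∑ i, zvec X S j ωhat i * X i j))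
      = ∑ k ∈ Sᶜ.erase j,
          (∑ i, zvec X S j ωhat i * X i k) * β k / (∑ i, zvec X S j ωhat i * X i j) ∧
    |(∑ i, zvec X S j ωhat i * y i) / (∑ i, zvec X S j ωhat i * X i j) - β j
        - (∑ i, zvec X S j ωhat i * ε i) / (∑ i, zvec X S j ωhat i * X i j)|
      ≤ (⨆ k ∈ Sᶜ.erase j,
            |Real.sqrt n * lam * Real.sqrt (∑ i, (psi X S j k i) ^ 2)
              / (∑ i, zvec X S j ωhat i * X i j)|)
          * ∑ k ∈ S₁ᶜ, |β k| := by
  have hjnot : j ∉ Sᶜ.erase j := fun h => (Finset.mem_erase.mp h).1 rfl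
  set Z := zvec X S j ωhat with hZ
  set D := ∑ i, Z i * X i j with hD
  have hsplit : ∑ i, Z i * y i = D * β j + (∑ k ∈ Sᶜ.erase j, (∑ i, Z i * X i k) * β k)
      + ∑ i, Z i * ε i := by
    subst hy
    have h1 : ∀ i, Z i * (X.mulVec β + ε) i = (∑ k, Z i * X i k * β k) + Z i * ε i := by
      intro i
      simp only [Pi.add_apply, Matrix.mulVec, dotProduct]
      rw [mul_add, Finset.mul_sum]
      congr 1
      exact Finset.sum_congr rfl fun k _ => by ring
    rw [Finset.sum_congr rfl fun i _ => h1 i, Finset.sum_add_distrib]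
    congr 1
    rw [Finset.sum_comm]
    have h2 : ∀ k : Fin p, (∑ i, Z i * X i k * β k) = (∑ i, Z i * X i k) * β k := by
      intro k; rw [Finset.sum_mul]
    rw [Finset.sum_congr rfl fun k _ => h2 k]
    have hzero : ∀ k ∈ S.erase j, (∑ i, Z i * X i k) * β k = 0 := fun k hk => by
      rw [hZ, z_dot_zero X j S hG ωhat hk, zero_mul]
    have hset : (S.erase j)ᶜ = insert j (Sᶜ.erase j) := by
      ext m
      simp only [Finset.mem_compl, Finset.mem_erase, Finset.mem_insert]
      by_cases hmj : m = j <;> simp [hmj] <;> tauto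
    calc ∑ k, (∑ i, Z i * X i k) * β k
        = (∑ k ∈ S.erase j, (∑ i, Z i * X i k) * β k)
          + ∑ k ∈ (S.erase j)ᶜ, (∑ i, Z i * X i k) * β k :=
          (Finset.sum_add_sum_compl _ _).symm
      _ = ∑ k ∈ (S.erase j)ᶜ, (∑ i, Z i * X i k) * β k := by
          rw [Finset.sum_congr rfl hzero]; simp
      _ = D * β j + ∑ k ∈ Sᶜ.erase j, (∑ i, Z i * X i k) * β k := by
          rw [hset, Finset.sum_insert hjnot, hD]
  have hfirst : (∑ i, Z i * y i) / D - β j - (∑ i, Z i * ε i) / D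
      = ∑ k ∈ Sᶜ.erase j, (∑ i, Z i * X i k) * β k / D := by
    rw [hsplit, (Finset.sum_div (Sᶜ.erase j) (fun k => (∑ i, Z i * X i k) * β k) D).symm]
    field_simp
    ring
  refine ⟨hfirst, ?_⟩
  rw [hfirst]
  have hM0 : (0:ℝ) ≤ ⨆ k ∈ Sᶜ.erase j,
      |Real.sqrt n * lam * Real.sqrt (∑ i, (psi X S j k i) ^ 2) / D| :=
    Real.iSup_nonneg fun k => Real.iSup_nonneg fun _ => abs_nonneg _
  have hfM : ∀ k ∈ Sᶜ.erase j,
      |Real.sqrt n * lam * Real.sqrt (∑ i, (psi X S j k i) ^ 2) / D|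
        ≤ ⨆ k ∈ Sᶜ.erase j,
            |Real.sqrt n * lam * Real.sqrt (∑ i, (psi X S j k i) ^ 2) / D| := by
    intro k hk
    have hbdd : BddAbove (Set.range fun k => ⨆ _ : k ∈ Sᶜ.erase j,
        |Real.sqrt n * lam * Real.sqrt (∑ i, (psi X S j k i) ^ 2) / D|) :=
      Set.Finite.bddAbove (Set.finite_range _)
    have hle := le_ciSup hbdd k
    rwa [ciSup_pos hk] at hle
  have hterm : ∀ k ∈ Sᶜ.erase j, |(∑ i, Z i * X i k) * β k / D|
      ≤ (⨆ k ∈ Sᶜ.erase j,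
          |Real.sqrt n * lam * Real.sqrt (∑ i, (psi X S j k i) ^ 2) / D|) * |β k| := by
    intro k hk
    have hq := kkt hn X j S lam hlam ωhat hω hk
    have hqx : ∑ i, Z i * X i k = ∑ i, Z i * psi X S j k i := z_dot_x_eq_psi X j S hG ωhat k
    have hDpos : 0 < |D| := abs_pos.mpr hzx
    have h1 : |(∑ i, Z i * X i k) / D|
        ≤ |Real.sqrt n * lam * Real.sqrt (∑ i, (psi X S j k i) ^ 2) / D| := by
      rw [abs_div, abs_div]
      exact (div_le_div_iff_of_pos_right hDpos).mpr (by rw [hqx]; exact hq.trans (le_abs_self _))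
    calc |(∑ i, Z i * X i k) * β k / D| = |(∑ i, Z i * X i k) / D| * |β k| := by
          rw [← abs_mul]; congr 1; ring
      _ ≤ _ := mul_le_mul_of_nonneg_right (h1.trans (hfM k hk)) (abs_nonneg _)
  calc |∑ k ∈ Sᶜ.erase j, (∑ i, Z i * X i k) * β k / D|
      ≤ ∑ k ∈ Sᶜ.erase j, |(∑ i, Z i * X i k) * β k / D| := Finset.abs_sum_le_sum_abs _ _
    _ ≤ ∑ k ∈ Sᶜ.erase j, (⨆ k ∈ Sᶜ.erase j,
          |Real.sqrt n * lam * Real.sqrt (∑ i, (psi X S j k i) ^ 2) / D|) * |β k| :=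
        Finset.sum_le_sum hterm
    _ = (⨆ k ∈ Sᶜ.erase j,
          |Real.sqrt n * lam * Real.sqrt (∑ i, (psi X S j k i) ^ 2) / D|)
        * ∑ k ∈ Sᶜ.erase j, |β k| := by rw [Finset.mul_sum]
    _ ≤ (⨆ k ∈ Sᶜ.erase j,
          |Real.sqrt n * lam * Real.sqrt (∑ i, (psi X S j k i) ^ 2) / D|)
        * ∑ k ∈ S₁ᶜ, |β k| := by
        refine mul_le_mul_of_nonneg_left ?_ hM0
        refine Finset.sum_le_sum_of_subset_of_nonneg ?_ fun k _ _ => abs_nonneg _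
        exact (Finset.erase_subset _ _).trans (Finset.compl_subset_compl.mpr hS₁)

end HOT
end
end

section
/- The hybrid orthogonalization vector z_j satisfies: (i) z_jᵀ x_k = 0 for every k ∈ Ŝ∖{j}; (ii) z_jᵀ x_k = z_jᵀ ψ_k^{(j)} and |z_jᵀ x_k| ≤ √n λ_j ‖ψ_k^{(j)}‖₂ for every k ∈ Ŝᶜ∖{j}; and (iii) z_jᵀ x_j = ‖z_j‖₂² + √n λ_j ∑_{k∈Ŝᶜ∖{j}} ‖ψ_k^{(j)}‖₂ |(ω̂_j)_k| ≥ ‖z_j‖₂². Consequently, if z_j ≠ 0 the noise factor τ_j = ‖z_j‖₂ / |z_jᵀ x_j| satisfies τ_j ≤ 1/‖z_j‖₂. -/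
/-!
The vector `z_j` is a combination of the residualized columns `ψ_k^{(j)}`, all of which lie in
the kernel of the symmetric idempotent `P_{Ŝ∖{j}}`; hence `z_j` is orthogonal to the column
space of `X_{Ŝ∖{j}}`, which gives (i) and `z_jᵀ x_k = z_jᵀ ψ_k^{(j)}`. Everything else is the
KKT system of the weighted lasso defining `ω̂_j`: perturbing one coordinate of the minimizer
by `t` changes the objective by a quadratic in `t` plus `λ_j v_{jk} (|ω̂_k + t| - |ω̂_k|)`, and
letting `t → 0` from either side gives `|z_jᵀ ψ_k| ≤ n λ_j v_{jk}` and
`z_jᵀ ψ_k · ω̂_k = n λ_j v_{jk} |ω̂_k|`. Summing the latter against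
`ψ_j = z_j + ∑ ω̂_k ψ_k` gives (iii).
-/

noncomputable section

open Finset Matrix

namespace HOT

variable {n p : ℕ}

open Filter Topology Function

lemma nonpos_of_eventually_le_mul {x c : ℝ} (h : ∀ᶠ t in 𝓝[>] (0 : ℝ), x ≤ t * c) : x ≤ 0 := by
  have hlim : Tendsto (fun t : ℝ => t * c) (𝓝[>] 0) (𝓝 0) := by
    simpa using ((continuous_mul_const c).tendsto 0).mono_left nhdsWithin_le_nhds
  exact ge_of_tendsto hlim h

section AbsPerturbation

variable {A c μ w : ℝ}

lemma abs_le_of_forall_abs_perturbation (hμ : 0 ≤ μ)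
    (h : ∀ t, 2 * t * c ≤ t ^ 2 * A + 2 * μ * (|w + t| - |w|)) : |c| ≤ μ := by
  have hup : c - μ ≤ 0 := by
    refine nonpos_of_eventually_le_mul (c := A / 2) ?_
    filter_upwards [self_mem_nhdsWithin] with t (ht : 0 < t)
    have hd : |w + t| - |w| ≤ t := by linarith [abs_add_le w t, abs_of_pos ht]
    nlinarith [h t, mul_le_mul_of_nonneg_left hd hμ]
  have hdown : -c - μ ≤ 0 := by
    refine nonpos_of_eventually_le_mul (c := A / 2) ?_
    filter_upwards [self_mem_nhdsWithin] with t (ht : 0 < t)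
    have hd : |w + -t| - |w| ≤ t := by
      linarith [abs_add_le w (-t), abs_neg t, abs_of_pos ht]
    nlinarith [h (-t), mul_le_mul_of_nonneg_left hd hμ]
  exact abs_le.mpr ⟨by linarith, by linarith⟩

lemma mul_eq_abs_of_forall_abs_perturbation (hμ : 0 ≤ μ)
    (h : ∀ t, 2 * t * c ≤ t ^ 2 * A + 2 * μ * (|w + t| - |w|)) : c * w = μ * |w| := by
  have hle : c * w ≤ μ * |w| :=
    calc c * w ≤ |c| * |w| := by rw [← abs_mul]; exact le_abs_self _
      _ ≤ μ * |w| := mul_le_mul_of_nonneg_right (abs_le_of_forall_abs_perturbation hμ h)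
          (abs_nonneg w)
  -- shrink `w` towards `0` by the factor `1 - s`
  have hge : μ * |w| - c * w ≤ 0 := by
    refine nonpos_of_eventually_le_mul (c := w ^ 2 * A / 2) ?_
    filter_upwards [Ioo_mem_nhdsGT one_pos] with s ⟨hs0, hs1⟩
    have hshrink : |w + -(s * w)| = (1 - s) * |w| := by
      rw [show w + -(s * w) = (1 - s) * w by ring, abs_mul, abs_of_pos (by linarith)]
    nlinarith [h (-(s * w)), hshrink]
  linarith

end AbsPerturbation

lemma sum_apply_update_of_mem {ι α M : Type*} [DecidableEq ι] [AddCommGroup M]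
    {s : Finset ι} {k : ι} (hk : k ∈ s) (G : ι → α → M) (b : ι → α) (x : α) :
    ∑ l ∈ s, G l (update b k x l) = ∑ l ∈ s, G l (b l) + (G k x - G k (b k)) := by
  have hrest : ∀ l ∈ s.erase k, G l (update b k x l) = G l (b l) := fun l hl => by
    rw [update_of_ne (Finset.ne_of_mem_erase hl)]
  rw [← Finset.add_sum_erase s _ hk, ← Finset.add_sum_erase s _ hk, Finset.sum_congr rfl hrest,
    update_self]
  abel

section Lasso

variable {m ι : Type*}

def lassoResidual (r : m → ℝ) (a : ι → m → ℝ) (s : Finset ι) (b : ι → ℝ) : m → ℝ :=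
  fun i => r i - ∑ k ∈ s, b k * a k i

def lassoObjective [Fintype m] (N lam : ℝ) (w : ι → ℝ) (r : m → ℝ) (a : ι → m → ℝ) (s : Finset ι)
    (b : ι → ℝ) : ℝ :=
  (2 * N)⁻¹ * ∑ i, lassoResidual r a s b i ^ 2 + lam * ∑ k ∈ s, w k * |b k|

variable [DecidableEq ι] {N lam : ℝ} {w : ι → ℝ} {r : m → ℝ} {a : ι → m → ℝ} {s : Finset ι}
  {b : ι → ℝ} {k : ι}

lemma lassoResidual_update (hk : k ∈ s) (t : ℝ) :
    lassoResidual r a s (update b k (b k + t)) = lassoResidual r a s b - t • a k := by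
  funext i
  simp only [lassoResidual, Pi.sub_apply, Pi.smul_apply, smul_eq_mul,
    sum_apply_update_of_mem hk (fun l y => y * a l i)]
  ring

variable [Fintype m]

lemma lassoObjective_update (hk : k ∈ s) (t : ℝ) :
    lassoObjective N lam w r a s (update b k (b k + t))
      = lassoObjective N lam w r a s b
        + ((2 * N)⁻¹ * (t ^ 2 * ∑ i, a k i ^ 2 - 2 * t * ∑ i, lassoResidual r a s b i * a k i)
          + lam * (w k * (|b k + t| - |b k|))) := by
  have hquad : ∑ i, (lassoResidual r a s b i - t * a k i) ^ 2
      = ∑ i, lassoResidual r a s b i ^ 2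
        + (t ^ 2 * ∑ i, a k i ^ 2 - 2 * t * ∑ i, lassoResidual r a s b i * a k i) := by
    simp only [Finset.mul_sum, ← Finset.sum_sub_distrib, ← Finset.sum_add_distrib]
    exact Finset.sum_congr rfl fun i _ => by ring
  simp only [lassoObjective, lassoResidual_update hk, Pi.sub_apply, Pi.smul_apply, smul_eq_mul,
    hquad, sum_apply_update_of_mem hk (fun l y => w l * |y|)]
  ring

lemma two_mul_lassoResidual_dot_le_of_isMinOn (hN : 0 < N) (hk : k ∈ s)
    (hmin : IsMinOn (lassoObjective N lam w r a s) Set.univ b) (t : ℝ) :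
    2 * t * ∑ i, lassoResidual r a s b i * a k i
      ≤ t ^ 2 * ∑ i, a k i ^ 2 + 2 * (N * lam * w k) * (|b k + t| - |b k|) := by
  have hgain := isMinOn_univ_iff.mp hmin (update b k (b k + t))
  rw [lassoObjective_update hk] at hgain
  have hscaled := mul_le_mul_of_nonneg_left (le_add_iff_nonneg_right _ |>.mp hgain)
    (by positivity : (0 : ℝ) ≤ 2 * N)
  rw [mul_zero, mul_add, ← mul_assoc, mul_inv_cancel₀ (by positivity), one_mul] at hscaled
  linarith

lemma abs_lassoResidual_dot_le (hN : 0 < N) (hlam : 0 ≤ lam)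
    (hmin : IsMinOn (lassoObjective N lam w r a s) Set.univ b)
    (hw : 0 ≤ w k) (hk : k ∈ s) :
    |∑ i, lassoResidual r a s b i * a k i| ≤ N * lam * w k :=
  abs_le_of_forall_abs_perturbation (by positivity)
    (two_mul_lassoResidual_dot_le_of_isMinOn hN hk hmin)

lemma lassoResidual_dot_mul_eq (hN : 0 < N) (hlam : 0 ≤ lam)
    (hmin : IsMinOn (lassoObjective N lam w r a s) Set.univ b)
    (hw : 0 ≤ w k) (hk : k ∈ s) :
    (∑ i, lassoResidual r a s b i * a k i) * b k = N * lam * w k * |b k| :=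
  mul_eq_abs_of_forall_abs_perturbation (by positivity)
    (two_mul_lassoResidual_dot_le_of_isMinOn hN hk hmin)

lemma lassoResidual_dot_target (hN : 0 < N) (hlam : 0 ≤ lam)
    (hmin : IsMinOn (lassoObjective N lam w r a s) Set.univ b)
    (hw : ∀ k ∈ s, 0 ≤ w k) :
    ∑ i, lassoResidual r a s b i * r i
      = ∑ i, lassoResidual r a s b i ^ 2 + N * lam * ∑ k ∈ s, w k * |b k| := by
  have hr : ∀ i, r i = lassoResidual r a s b i + ∑ k ∈ s, b k * a k i := fun i => by
    simp only [lassoResidual, sub_add_cancel]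
  calc ∑ i, lassoResidual r a s b i * r i
      = ∑ i, lassoResidual r a s b i ^ 2
        + ∑ k ∈ s, (∑ i, lassoResidual r a s b i * a k i) * b k := by
        simp only [Finset.sum_mul]
        rw [Finset.sum_comm (s := s), ← Finset.sum_add_distrib]
        refine Finset.sum_congr rfl fun i _ => ?_
        conv_lhs => rw [hr i]
        rw [mul_add, Finset.mul_sum]
        exact congrArg₂ _ (sq _).symm (Finset.sum_congr rfl fun _ _ => by ring)
    _ = _ := by
        rw [Finset.mul_sum]
        exact congrArg _ (Finset.sum_congr rfl fun k hk => by
          rw [lassoResidual_dot_mul_eq hN hlam hmin (hw k hk) hk, mul_assoc])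

end Lasso

section SymmetricIdempotent

variable {m : Type*} [Fintype m] {P : Matrix m m ℝ}

lemma mulVec_sub_mulVec_self_eq_zero (hP : IsIdempotentElem P) (x : m → ℝ) :
    P *ᵥ (x - P *ᵥ x) = 0 := by
  rw [mulVec_sub, mulVec_mulVec, hP.eq, sub_self]

lemma dotProduct_sub_mulVec_self (hP : P.IsSymm) {u : m → ℝ} (hu : P *ᵥ u = 0) (x : m → ℝ) :
    u ⬝ᵥ (x - P *ᵥ x) = u ⬝ᵥ x := by
  rw [dotProduct_sub, dotProduct_mulVec, ← mulVec_transpose, hP.eq, hu, zero_dotProduct,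
    sub_zero]

end SymmetricIdempotent

variable {X : Matrix (Fin n) (Fin p) ℝ} {S : Finset (Fin p)} {j : Fin p}

lemma proj_isSymm : (proj X S).IsSymm := by
  rw [IsSymm, proj, transpose_mul, transpose_mul, transpose_transpose, transpose_nonsing_inv, gram,
    transpose_mul, transpose_transpose, Matrix.mul_assoc]

lemma proj_mul_sub (hG : IsUnit (gram X S)) : proj X S * sub X S = sub X S := by
  rw [proj, Matrix.mul_assoc, Matrix.mul_assoc, ← gram,
    nonsing_inv_mul _ ((isUnit_iff_isUnit_det _).mp hG), Matrix.mul_one]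

lemma proj_isIdempotentElem (hG : IsUnit (gram X S)) : IsIdempotentElem (proj X S) := by
  calc proj X S * proj X S = proj X S * sub X S * (gram X S)⁻¹ * (sub X S)ᵀ := by
        simp only [proj, Matrix.mul_assoc]
    _ = proj X S := by rw [proj_mul_sub hG, proj]

lemma proj_mulVec_col (hG : IsUnit (gram X S)) {k : Fin p} (hk : k ∈ S) :
    proj X S *ᵥ col X k = col X k := by
  have hcol : col X k = sub X S *ᵥ Pi.single (⟨k, hk⟩ : S) 1 := by
    funext i
    simp [col, sub, mulVec_single]
  rw [hcol, mulVec_mulVec, proj_mul_sub hG]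

lemma psi_eq_zero_of_mem (hG : IsUnit (gram X (S.erase j))) {k : Fin p} (hk : k ∈ S.erase j) :
    psi X S j k = 0 := by
  rw [psi, proj_mulVec_col hG hk, sub_self]

lemma zvec_eq_lassoResidual (ω : Fin p → ℝ) :
    zvec X S j ω = lassoResidual (psi X S j j) (psi X S j) (Sᶜ.erase j) ω :=
  rfl

lemma zvec_eq_sub_sum_smul (ω : Fin p → ℝ) :
    zvec X S j ω = psi X S j j - ∑ k ∈ Sᶜ.erase j, ω k • psi X S j k := by
  funext i
  simp [zvec, Finset.sum_apply]

lemma proj_mulVec_zvec (hG : IsUnit (gram X (S.erase j))) (ω : Fin p → ℝ) :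
    proj X (S.erase j) *ᵥ zvec X S j ω = 0 := by
  have hpsi : ∀ k, proj X (S.erase j) *ᵥ psi X S j k = 0 := fun k =>
    mulVec_sub_mulVec_self_eq_zero (proj_isIdempotentElem hG) _
  simp [zvec_eq_sub_sum_smul, mulVec_sub, mulVec_sum, mulVec_smul, hpsi]

lemma sum_zvec_mul_col_eq_sum_zvec_mul_psi (hG : IsUnit (gram X (S.erase j))) (ω : Fin p → ℝ)
    (k : Fin p) : ∑ i, zvec X S j ω i * X i k = ∑ i, zvec X S j ω i * psi X S j k i :=
  (dotProduct_sub_mulVec_self proj_isSymm (proj_mulVec_zvec hG ω) _).symm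

lemma natCast_mul_v (k : Fin p) :
    (n : ℝ) * v X S j k = √(n : ℝ) * √(∑ i, psi X S j k i ^ 2) := by
  rcases eq_or_ne (√(n : ℝ)) 0 with h | h
  · simp [v, h]
  · rw [v, ← mul_div_assoc, div_eq_iff h, mul_right_comm,
      Real.mul_self_sqrt (Nat.cast_nonneg _)]

lemma sqrt_div_abs_le_one_div_sqrt {q d : ℝ} (hq : 0 < q) (hqd : q ≤ d) : √q / |d| ≤ 1 / √q := by
  rw [abs_of_pos (hq.trans_le hqd), div_le_div_iff₀ (hq.trans_le hqd) (Real.sqrt_pos.mpr hq),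
    one_mul, Real.mul_self_sqrt hq.le]
  exact hqd

theorem hybrid_orthogonalization_properties (hn : 0 < n)
    (X : Matrix (Fin n) (Fin p) ℝ) (j : Fin p) (S : Finset (Fin p))
    (hG : IsUnit (gram X (S.erase j)))
    (lam : ℝ) (hlam : 0 < lam)
    (ωhat : Fin p → ℝ) (hω : ∀ b : Fin p → ℝ, gObj X S j lam ωhat ≤ gObj X S j lam b) :
    (∀ k ∈ S.erase j, ∑ i, zvec X S j ωhat i * X i k = 0) ∧
    (∀ k ∈ Sᶜ.erase j,
        (∑ i, zvec X S j ωhat i * X i k) = (∑ i, zvec X S j ωhat i * psi X S j k i) ∧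
        |∑ i, zvec X S j ωhat i * X i k|
          ≤ Real.sqrt n * lam * Real.sqrt (∑ i, (psi X S j k i) ^ 2)) ∧
    ((∑ i, zvec X S j ωhat i * X i j)
        = (∑ i, (zvec X S j ωhat i) ^ 2)
          + Real.sqrt n * lam
            * ∑ k ∈ Sᶜ.erase j, Real.sqrt (∑ i, (psi X S j k i) ^ 2) * |ωhat k| ∧
      (∑ i, (zvec X S j ωhat i) ^ 2) ≤ ∑ i, zvec X S j ωhat i * X i j) ∧
    (zvec X S j ωhat ≠ 0 →
      Real.sqrt (∑ i, (zvec X S j ωhat i) ^ 2) / |∑ i, zvec X S j ωhat i * X i j|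
        ≤ 1 / Real.sqrt (∑ i, (zvec X S j ωhat i) ^ 2)) := by
  have hmin : IsMinOn (lassoObjective n lam (v X S j) (psi X S j j) (psi X S j) (Sᶜ.erase j))
      Set.univ ωhat := isMinOn_univ_iff.mpr hω
  have hnR : (0 : ℝ) < n := Nat.cast_pos.mpr hn
  have hv : ∀ k, 0 ≤ v X S j k := fun k => by unfold v; positivity
  have hnv : ∀ k, (n : ℝ) * lam * v X S j k = √(n : ℝ) * lam * √(∑ i, psi X S j k i ^ 2) :=
    fun k => by rw [mul_right_comm, natCast_mul_v]; ring
  have hdot := sum_zvec_mul_col_eq_sum_zvec_mul_psi hG ωhat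
  have hxj : ∑ i, zvec X S j ωhat i * X i j = ∑ i, zvec X S j ωhat i ^ 2
      + √(n : ℝ) * lam * ∑ k ∈ Sᶜ.erase j, √(∑ i, psi X S j k i ^ 2) * |ωhat k| := by
    rw [hdot j, zvec_eq_lassoResidual,
      lassoResidual_dot_target hnR hlam.le hmin fun k _ => hv k, mul_sum, mul_sum]
    simp_rw [← mul_assoc, hnv]
  refine ⟨fun k hk => ?_, fun k hk => ⟨hdot k, ?_⟩, ⟨hxj, ?_⟩, fun hz => ?_⟩
  · simpa [psi_eq_zero_of_mem hG hk] using hdot k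
  · rw [hdot k, ← hnv]
    exact abs_lassoResidual_dot_le hnR hlam.le hmin (hv k) hk
  · rw [hxj]
    exact le_add_of_nonneg_right (by positivity)
  · obtain ⟨i, hi⟩ := Function.ne_iff.mp hz
    have hpos : 0 < ∑ i, zvec X S j ωhat i ^ 2 :=
      sum_pos' (fun _ _ => sq_nonneg _) ⟨i, mem_univ i, sq_pos_of_ne_zero hi⟩
    exact sqrt_div_abs_le_one_div_sqrt hpos (hxj ▸ le_add_of_nonneg_right (by positivity))

end HOT
end
end
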